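/- Let T be the 4-regular torus graph on m² = 2k vertices, namely the box product C_m □ C_m with m ≥ 5, and let c be a coloring with 2 types where each color class has size exactly k. If c is an equilibrium under the difference-seeking utility U_#, then 5·sw(c, U_#) ≥ 24k. -/

import Mathlib

open SimpleGraph Finset

/-- The coloring obtained from `c` by swapping the colors (agents) at `u` and `v`. -/
def swapColoring {V : Type*} [DecidableEq V] {t : ℕ} (c : V → Fin t) (u v : V) : V → Fin t :=
  fun w => if w = u then c v else if w = v then c u else c w

/-- The binary utility `U_b`: 1 if some neighbor has a different type, 0 otherwise. -/
def Ub {V : Type*} [Fintype V] (G : SimpleGraph V) [DecidableRel G.Adj]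
    {t : ℕ} (c : V → Fin t) (v : V) : ℕ :=
  if ∃ w ∈ G.neighborFinset v, c w ≠ c v then 1 else 0

/-- The difference-seeking utility `U_#`: the number of neighbors of a different type. -/
def Usharp {V : Type*} [Fintype V] (G : SimpleGraph V) [DecidableRel G.Adj]
    {t : ℕ} (c : V → Fin t) (v : V) : ℕ :=
  ((G.neighborFinset v).filter fun w => c w ≠ c v).card

/-- `T_c(v)`: the set of types present in the neighborhood of `v`. -/
def typesIn {V : Type*} [Fintype V] (G : SimpleGraph V) [DecidableRel G.Adj]
    {t : ℕ} (c : V → Fin t) (v : V) : Finset (Fin t) :=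
  (G.neighborFinset v).image c

/-- The variety-seeking utility `U_τ`: the number of types other than `c v` in the
neighborhood of `v`. -/
def Utau {V : Type*} [Fintype V] (G : SimpleGraph V) [DecidableRel G.Adj]
    {t : ℕ} (c : V → Fin t) (v : V) : ℕ :=
  ((typesIn G c v).erase (c v)).card

/-- The swap of `u` and `v` is improving under utility `U`. -/
def ImprovingSwap {V : Type*} [DecidableEq V] {t : ℕ}
    (U : (V → Fin t) → V → ℕ) (c : V → Fin t) (u v : V) : Prop :=
  U c u < U (swapColoring c u v) v ∧ U c v < U (swapColoring c u v) u

/-- `c` is an equilibrium under the utility `U`: no improving swap exists. -/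
def Equilibrium {V : Type*} [DecidableEq V] {t : ℕ}
    (U : (V → Fin t) → V → ℕ) (c : V → Fin t) : Prop :=
  ∀ u v : V, c u ≠ c v → ¬ ImprovingSwap U c u v

/-- The number of monochromatic edges of `c`. -/
def monoCount {V : Type*} [Fintype V] [DecidableEq V] (G : SimpleGraph V) [DecidableRel G.Adj]
    {t : ℕ} (c : V → Fin t) : ℕ :=
  (G.edgeFinset.filter fun e => (e.map c).IsDiag).card

/-- The number of colorful edges of `c`. -/
def ceCount {V : Type*} [Fintype V] [DecidableEq V] (G : SimpleGraph V) [DecidableRel G.Adj]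
    {t : ℕ} (c : V → Fin t) : ℕ :=
  (G.edgeFinset.filter fun e => ¬ (e.map c).IsDiag).card

/-- The cycle graph on `ZMod n`: `i` adjacent to `i + 1` and `i - 1`. -/
def cycleZMod (n : ℕ) : SimpleGraph (ZMod n) := SimpleGraph.circulantGraph {1}

instance (n : ℕ) : DecidableRel (cycleZMod n).Adj := fun a b =>
  decidable_of_iff (a ≠ b ∧ (a - b = 1 ∨ b - a = 1)) (by simp [cycleZMod])

instance {α β : Type*} (G : SimpleGraph α) (H : SimpleGraph β)
    [DecidableRel G.Adj] [DecidableRel H.Adj] [DecidableEq α] [DecidableEq β] :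
    DecidableRel (G □ H).Adj := fun x y =>
  decidable_of_iff (G.Adj x.1 y.1 ∧ x.2 = y.2 ∨ H.Adj x.2 y.2 ∧ x.1 = y.1)
    (SimpleGraph.boxProd_adj).symm

/-! After swapping agents of different types at `u` and `v`, the agent from `u` sees at `v` the
`deg v - U v` neighbours of `v`'s old type, plus the agent from `v` when `u ~ v`. So in an
equilibrium on a 4-regular graph, `U u + U v ≥ 4 + [u ~ v]`.

If some `U u ≤ 1`, every agent of the other type has utility at least 3; both types are incident to
the same bichromatic edges, so `sw ≥ 2 · 3k`. Otherwise all utilities are at least 2, and every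
bichromatic edge at a vertex of the set `B` of utility-2 vertices ends in the set `S` of vertices
of utility at least 3. Counting these edges from both ends gives `2|B| ≤ ∑_S U`; with
`∑_S U ≥ 3|S|` this yields `5 sw = 10|B| + 5 ∑_S U ≥ 12 (|B| + |S|) = 24k`. -/

section Usharp

variable {V : Type*} [Fintype V] (G : SimpleGraph V) [DecidableRel G.Adj] {t : ℕ}

lemma usharp_le_degree (c : V → Fin t) (v : V) : Usharp G c v ≤ G.degree v := by
  rw [← card_neighborFinset_eq_degree]
  exact card_filter_le _ _

lemma sum_usharp_eq_card (c : V → Fin t) (s : Finset V) :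
    ∑ u ∈ s, Usharp G c u = #{p ∈ s ×ˢ univ | G.Adj p.1 p.2 ∧ c p.2 ≠ c p.1} := by
  rw [card_filter, sum_product]
  refine sum_congr rfl fun u _ => ?_
  rw [Usharp, neighborFinset_eq_filter, filter_filter, card_filter]

lemma sum_usharp_le_sum_usharp {c : V → Fin t} {s s' : Finset V}
    (h : ∀ u ∈ s, ∀ v, G.Adj u v → c u ≠ c v → v ∈ s') :
    ∑ u ∈ s, Usharp G c u ≤ ∑ u ∈ s', Usharp G c u := by
  rw [sum_usharp_eq_card, sum_usharp_eq_card]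
  refine card_le_card_of_injOn Prod.swap (fun p hp => ?_) Prod.swap_injective.injOn
  simp only [coe_filter, mem_product, mem_univ, and_true, Set.mem_ofPred_eq] at hp ⊢
  obtain ⟨hs, hadj, hne⟩ := hp
  exact ⟨h _ hs _ hadj hne.symm, hadj.symm, hne.symm⟩

lemma sum_usharp_eq_two_mul_sum_filter (c : V → Fin 2) (i : Fin 2) :
    ∑ v, Usharp G c v = 2 * ∑ v with c v = i, Usharp G c v := by
  have hle := sum_usharp_le_sum_usharp G (c := c) (s := {v | c v = i}) (s' := {v | ¬ c v = i})
    (by simp +contextual [Ne.symm])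
  have hge := sum_usharp_le_sum_usharp G (c := c) (s := {v | ¬ c v = i}) (s' := {v | c v = i})
    (by simp only [mem_filter, mem_univ, true_and]; omega)
  rw [← sum_filter_add_sum_filter_not univ (c · = i)]
  omega

end Usharp

section Swap

variable {V : Type*} [DecidableEq V]

lemma swapColoring_comm {t : ℕ} (c : V → Fin t) (u v : V) :
    swapColoring c u v = swapColoring c v u := by
  funext w
  unfold swapColoring
  grind

variable [Fintype V] (G : SimpleGraph V) [DecidableRel G.Adj]

lemma usharp_swapColoring {c : V → Fin 2} {u v : V} (h : c u ≠ c v) :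
    Usharp G (swapColoring c u v) v =
      G.degree v - Usharp G c v + if G.Adj v u then 1 else 0 := by
  have hvu : v ≠ u := fun e => h (e ▸ rfl)
  have hfilter : {w ∈ G.neighborFinset v | swapColoring c u v w ≠ swapColoring c u v v} =
      {w ∈ G.neighborFinset v | ¬ c w ≠ c v} ∪ {w ∈ G.neighborFinset v | w = u} := by
    ext w
    have hloop := G.notMem_neighborFinset_self v
    simp only [swapColoring, mem_filter, mem_union, if_neg hvu]
    grind
  have hdisj :
      Disjoint {w ∈ G.neighborFinset v | ¬ c w ≠ c v} {w ∈ G.neighborFinset v | w = u} :=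
    disjoint_filter.mpr fun w _ hw hwu => h (hwu ▸ not_not.mp hw)
  have hsplit := card_filter_add_card_filter_not (s := G.neighborFinset v) (fun w => c w ≠ c v)
  rw [card_neighborFinset_eq_degree] at hsplit
  rw [Usharp, hfilter, card_union_of_disjoint hdisj, filter_eq', apply_ite card, card_singleton,
    card_empty, Usharp, ← hsplit]
  simp only [mem_neighborFinset, Nat.add_sub_cancel_left]

lemma Equilibrium.add_le_usharp_add {d : ℕ} (hG : G.IsRegularOfDegree d) {c : V → Fin 2}
    (heq : Equilibrium (Usharp G) c) {u v : V} (h : c u ≠ c v) :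
    d + (if G.Adj u v then 1 else 0) ≤ Usharp G c u + Usharp G c v := by
  have hu := usharp_le_degree G c u
  have hv := usharp_le_degree G c v
  rw [hG.degree_eq] at hu hv
  by_contra! hlt
  refine heq u v h ⟨?_, ?_⟩
  · rw [usharp_swapColoring G h, hG.degree_eq]
    simp only [G.adj_comm v u]
    split_ifs at hlt ⊢ <;> omega
  · rw [swapColoring_comm, usharp_swapColoring G h.symm, hG.degree_eq]
    split_ifs at hlt ⊢ <;> omega

end Swap

section FourRegular

variable {V : Type*} [Fintype V] [DecidableEq V] {G : SimpleGraph V} [DecidableRel G.Adj]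
  {c : V → Fin 2}

lemma Equilibrium.six_mul_le_sum_usharp_of_usharp_le_one (hG : G.IsRegularOfDegree 4)
    (heq : Equilibrium (Usharp G) c) {k : ℕ} (hsize : ∀ i, #{v | c v = i} = k) {u : V}
    (hu : Usharp G c u ≤ 1) : 6 * k ≤ ∑ v, Usharp G c v := by
  obtain ⟨j, hj⟩ : ∃ j : Fin 2, c u ≠ j := ⟨c u + 1, by simp⟩
  have hclass : k • 3 ≤ ∑ v with c v = j, Usharp G c v := by
    rw [← hsize j]
    refine card_nsmul_le_sum _ _ _ fun v hv => ?_
    rw [mem_filter] at hv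
    have := heq.add_le_usharp_add G hG (hv.2 ▸ hj)
    split_ifs at this <;> omega
  rw [sum_usharp_eq_two_mul_sum_filter G c j]
  rw [smul_eq_mul] at hclass
  omega

lemma Equilibrium.twelve_mul_card_le_five_mul_sum_usharp (hG : G.IsRegularOfDegree 4)
    (heq : Equilibrium (Usharp G) c) (htwo : ∀ v, 2 ≤ Usharp G c v) :
    12 * Fintype.card V ≤ 5 * ∑ v, Usharp G c v := by
  have hcard := card_filter_add_card_filter_not (s := univ) (Usharp G c · = 2)
  have hsum := sum_filter_add_sum_filter_not univ (Usharp G c · = 2) (Usharp G c)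
  have htwos : ∑ v with Usharp G c v = 2, Usharp G c v = #{v | Usharp G c v = 2} • 2 :=
    sum_const_nat fun v hv => (mem_filter.mp hv).2
  have hrest : #{v | ¬ Usharp G c v = 2} • 3 ≤ ∑ v with ¬ Usharp G c v = 2, Usharp G c v :=
    card_nsmul_le_sum _ _ _ fun v hv => by have := htwo v; have := (mem_filter.mp hv).2; omega
  have hcompare : ∑ v with Usharp G c v = 2, Usharp G c v ≤
      ∑ v with ¬ Usharp G c v = 2, Usharp G c v := by
    refine sum_usharp_le_sum_usharp G fun u hu v hadj hne => ?_
    have := heq.add_le_usharp_add G hG hne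
    simp only [mem_filter, mem_univ, true_and, if_pos hadj] at hu this ⊢
    omega
  rw [card_univ] at hcard
  rw [smul_eq_mul] at htwos hrest
  omega

theorem Equilibrium.twenty_four_mul_le_five_mul_sum_usharp (hG : G.IsRegularOfDegree 4)
    (heq : Equilibrium (Usharp G) c) {k : ℕ} (hsize : ∀ i, #{v | c v = i} = k) :
    24 * k ≤ 5 * ∑ v, Usharp G c v := by
  have hcard : Fintype.card V = 2 * k := by
    rw [← card_univ, card_eq_sum_card_fiberwise (f := c) (t := univ) (by simp)]
    simp [hsize]
  by_cases htwo : ∀ v, 2 ≤ Usharp G c v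
  · have := heq.twelve_mul_card_le_five_mul_sum_usharp hG htwo
    omega
  · push Not at htwo
    obtain ⟨u, hu⟩ := htwo
    have := heq.six_mul_le_sum_usharp_of_usharp_le_one hG hsize (Nat.le_of_lt_succ hu)
    omega

end FourRegular

lemma ZMod.natCast_ne_zero_of_pos_of_lt {a n : ℕ} (ha : 0 < a) (han : a < n) :
    (a : ZMod n) ≠ 0 :=
  (ZMod.natCast_eq_zero_iff a n).not.mpr (Nat.not_dvd_of_pos_of_lt ha han)

section Cycle

variable {n : ℕ} [NeZero n]

lemma cycleZMod_neighborFinset (hn : 3 ≤ n) (a : ZMod n) :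
    (cycleZMod n).neighborFinset a = {a + 1, a - 1} := by
  have h1 : (1 : ZMod n) ≠ 0 := by
    exact_mod_cast ZMod.natCast_ne_zero_of_pos_of_lt (n := n) one_pos (by omega)
  ext b
  rw [mem_neighborFinset]
  simp only [cycleZMod, circulantGraph_adj, Set.mem_singleton_iff, mem_insert, mem_singleton]
  constructor
  · rintro ⟨-, h | h⟩
    · right; rw [← h]; ring
    · left; rw [← h]; ring
  · rintro (rfl | rfl)
    · exact ⟨fun h => h1 (by linear_combination -h), Or.inr (by ring)⟩
    · exact ⟨fun h => h1 (by linear_combination h), Or.inl (by ring)⟩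

lemma cycleZMod_isRegularOfDegree (hn : 3 ≤ n) : (cycleZMod n).IsRegularOfDegree 2 := fun a => by
  have h2 : (2 : ZMod n) ≠ 0 := by
    exact_mod_cast ZMod.natCast_ne_zero_of_pos_of_lt (n := n) two_pos (by omega)
  rw [← card_neighborFinset_eq_degree, cycleZMod_neighborFinset hn, card_pair]
  intro h
  apply h2
  linear_combination h

end Cycle

theorem stmt17_general (k m : ℕ) (hm : 5 ≤ m) [NeZero m]
    (c : ZMod m × ZMod m → Fin 2)
    (hsize : ∀ i : Fin 2,
      ((Finset.univ : Finset (ZMod m × ZMod m)).filter fun v => c v = i).card = k)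
    (heq : Equilibrium (Usharp (cycleZMod m □ cycleZMod m)) c) :
    24 * k ≤ 5 * ∑ v, Usharp (cycleZMod m □ cycleZMod m) c v := by
  have hC := cycleZMod_isRegularOfDegree (n := m) (by omega)
  refine heq.twenty_four_mul_le_five_mul_sum_usharp (fun v => ?_) hsize
  rw [degree_boxProd, hC.degree_eq, hC.degree_eq]

theorem stmt17 (k m : ℕ) (hm : 5 ≤ m) (hn : m * m = 2 * k) [NeZero m]
    (c : ZMod m × ZMod m → Fin 2)
    (hsize : ∀ i : Fin 2,
      ((Finset.univ : Finset (ZMod m × ZMod m)).filter fun v => c v = i).card = k)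
    (heq : Equilibrium (Usharp (cycleZMod m □ cycleZMod m)) c) :
    24 * k ≤ 5 * ∑ v, Usharp (cycleZMod m □ cycleZMod m) c v :=
  stmt17_general k m hm c hsize heq
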